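/- Let m ≤ 2^{k/20}, let D ⊆ {0,1}^m with |D| ≥ 2^{m−k/2}, set N_D = |D|, and for M ∈ 𝔽₂^{k×(m−k)} let N_M = |D ∩ {(x, xᵀM) : x ∈ {0,1}^k}|. Then E_{M ∼ U_{k×(m−k)}}[ (N_M/N_D − 2^{−(m−k)})² ] ≤ 2^{−2(m−k)−k/2}·2^{k/10}, and hence with probability at least 1 − 2^{−k/8} over a uniformly random M, |N_M/N_D − 2^{−(m−k)}| ≤ 2^{−k/8}·2^{−(m−k)}. -/

import Mathlib

/-!
For `x ≠ 0` the map `M ↦ xᵀM` is a surjective linear map, so a point `(x, y)` lies on the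
graph of a uniformly random `M` with probability `2^{-(m-k)}`; for two points whose first
coordinates are distinct and nonzero (hence linearly independent over `𝔽₂`) these events are
independent. Hence the points of `D` with `x ≠ 0`
contribute to `N_M` a sum of pairwise independent indicators, of variance at most
`|D| 2^{-(m-k)}`, while the points with `x = 0` contribute a constant within `1` of its mean
share. Dividing by `|D|²` and using `|D| ≥ 2^{m-k/2}` gives the second-moment bound as soon as
`k ≥ 10`; below that, `m ≤ 2^{k/20}` leaves only the degenerate cases `k = 0` and `m = k`.
The probability bound is then Chebyshev's inequality.
-/

open Finset Matrix
open scoped Classical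

theorem AddMonoidHom.card_fiber_mul_card_of_surjective {G H : Type*} [AddGroup G] [Fintype G]
    [AddGroup H] [Fintype H] [DecidableEq H] (f : G →+ H) (hf : Function.Surjective f) (h : H) :
    #{g | f g = h} * Fintype.card H = Fintype.card G :=
  calc #{g | f g = h} * Fintype.card H = ∑ h' : H, #{g | f g = h'} := by
        rw [sum_congr rfl fun h' _ => card_fiber_eq_of_mem_range f (hf h') (hf h), sum_const,
          card_univ, smul_eq_mul, mul_comm]
    _ = Fintype.card G := (card_eq_sum_card_fiberwise fun _ _ => mem_univ _).symm

theorem card_filter_abs_le_of_sum_sq_le {ι : Type*} [Fintype ι] {f : ι → ℝ} {a ε : ℝ}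
    (ha : 0 < a) (h : ∑ i, f i ^ 2 ≤ ε * a ^ 2 * Fintype.card ι) :
    (1 - ε) * Fintype.card ι ≤ #{i | |f i| ≤ a} := by
  have hfar : #{i | ¬|f i| ≤ a} * a ^ 2 ≤ ∑ i, f i ^ 2 :=
    calc #{i | ¬|f i| ≤ a} * a ^ 2 ≤ ∑ i with ¬|f i| ≤ a, f i ^ 2 := by
          rw [← nsmul_eq_mul]
          refine card_nsmul_le_sum _ _ _ fun i hi => ?_
          rw [← sq_abs (f i)]
          exact pow_le_pow_left₀ ha.le (not_le.mp (mem_filter.mp hi).2).le 2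
      _ ≤ ∑ i, f i ^ 2 :=
          sum_le_sum_of_subset_of_nonneg (filter_subset _ _) fun i _ _ => sq_nonneg _
  have hfar' : (#{i | ¬|f i| ≤ a} : ℝ) ≤ ε * Fintype.card ι :=
    le_of_mul_le_mul_right (by linarith) (pow_pos ha 2)
  have hsplit : (#{i | |f i| ≤ a} : ℝ) + #{i | ¬|f i| ≤ a} = Fintype.card ι := by
    exact_mod_cast card_filter_add_card_filter_not (s := univ) (fun i => |f i| ≤ a)
  linarith

theorem Fintype.card_matrix {R : Type*} [Fintype R] (a b : Type*) [Fintype a] [Fintype b]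
    [DecidableEq a] [DecidableEq b] :
    Fintype.card (Matrix a b R) = Fintype.card R ^ (Fintype.card a * Fintype.card b) :=
  calc Fintype.card (Matrix a b R) = Fintype.card (a → b → R) := Fintype.card_congr (Equiv.refl _)
    _ = _ := by rw [Fintype.card_fun, Fintype.card_fun, ← pow_mul, mul_comm]

namespace Matrix

variable {ι k n K : Type*} [Field K] [Fintype ι] [Fintype k]

theorem mul_left_surjective_of_linearIndependent_row {X : Matrix ι k K}
    (hX : LinearIndependent K X.row) : Function.Surjective fun M : Matrix k n K => X * M := by
  have hrange : LinearMap.range X.mulVecLin = ⊤ := Submodule.eq_top_of_finrank_eq <| by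
    rw [← rank, hX.rank_matrix, Module.finrank_fintype_fun_eq_card]
  obtain ⟨Y, hY⟩ := mulVec_surjective_iff_exists_right_inverse.mp (LinearMap.range_eq_top.mp hrange)
  exact fun B => ⟨Y * B, by simp only [← Matrix.mul_assoc, hY, Matrix.one_mul]⟩

theorem card_filter_forall_vecMul_eq_mul_card_pow [Fintype K] [Fintype n] [DecidableEq k]
    [DecidableEq n] {v : ι → k → K} (hv : LinearIndependent K v) (b : ι → n → K) :
    #{M : Matrix k n K | ∀ i, v i ᵥ* M = b i} * Fintype.card K ^ (Fintype.card ι * Fintype.card n)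
      = Fintype.card K ^ (Fintype.card k * Fintype.card n) := by
  let f : Matrix k n K →+ Matrix ι n K := ⟨⟨(of v * ·), Matrix.mul_zero _⟩, Matrix.mul_add _⟩
  have hfiber := f.card_fiber_mul_card_of_surjective
    (mul_left_surjective_of_linearIndependent_row (X := of v) hv) (of b)
  rw [Fintype.card_matrix, Fintype.card_matrix] at hfiber
  rw [← hfiber]
  congr 3
  ext M
  exact funext_iff.symm

end Matrix

section GraphCount

variable {k n : ℕ}

theorem card_vecMul_eq_mul_two_pow {x : Fin k → ZMod 2} (hx : x ≠ 0) (u : Fin n → ZMod 2) :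
    #{M : Matrix (Fin k) (Fin n) (ZMod 2) | x ᵥ* M = u} * 2 ^ n = 2 ^ (k * n) := by
  have hcard := card_filter_forall_vecMul_eq_mul_card_pow (v := ![x])
    (linearIndependent_unique_iff.mpr hx) ![u]
  simp only [Fin.forall_fin_one, cons_val_zero, ZMod.card, Fintype.card_fin] at hcard
  rwa [show Nat.succ 0 * n = n from Nat.one_mul n] at hcard

theorem card_vecMul_pair_eq_mul_two_pow {x y : Fin k → ZMod 2} (hx : x ≠ 0) (hy : y ≠ 0)
    (hxy : x ≠ y) (u v : Fin n → ZMod 2) :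
    #{M : Matrix (Fin k) (Fin n) (ZMod 2) | x ᵥ* M = u ∧ y ᵥ* M = v} * 2 ^ (2 * n)
      = 2 ^ (k * n) := by
  have hind : LinearIndependent (ZMod 2) ![x, y] := by
    rw [LinearIndependent.pair_iff' hx]
    intro a
    rcases (by decide : ∀ a : ZMod 2, a = 0 ∨ a = 1) a with rfl | rfl
    · rw [zero_smul]
      exact hy.symm
    · rw [one_smul]
      exact hxy
  have hcard := card_filter_forall_vecMul_eq_mul_card_pow hind ![u, v]
  simp only [Fin.forall_fin_two, cons_val_zero, cons_val_one, ZMod.card, Fintype.card_fin]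
    at hcard
  exact hcard

theorem card_matrix_zmod_two : Fintype.card (Matrix (Fin k) (Fin n) (ZMod 2)) = 2 ^ (k * n) := by
  rw [Fintype.card_matrix, ZMod.card, Fintype.card_fin, Fintype.card_fin]

noncomputable def graphIndicator (M : Matrix (Fin k) (Fin n) (ZMod 2))
    (z : (Fin k → ZMod 2) × (Fin n → ZMod 2)) : ℝ :=
  if z.2 = z.1 ᵥ* M then 1 else 0

theorem graphIndicator_mul_self (M : Matrix (Fin k) (Fin n) (ZMod 2))
    (z : (Fin k → ZMod 2) × (Fin n → ZMod 2)) :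
    graphIndicator M z * graphIndicator M z = graphIndicator M z := by
  unfold graphIndicator
  split_ifs <;> norm_num

theorem graphIndicator_of_fst_eq_zero {z : (Fin k → ZMod 2) × (Fin n → ZMod 2)} (hz : z.1 = 0)
    (M : Matrix (Fin k) (Fin n) (ZMod 2)) : graphIndicator M z = graphIndicator 0 z := by
  simp only [graphIndicator, hz, zero_vecMul]

theorem sum_graphIndicator {z : (Fin k → ZMod 2) × (Fin n → ZMod 2)} (hz : z.1 ≠ 0) :
    ∑ M, graphIndicator M z = 2 ^ (k * n) * ((2 : ℝ) ^ n)⁻¹ := by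
  have hcard := card_vecMul_eq_mul_two_pow hz z.2
  rw [filter_congr fun M _ => eq_comm] at hcard
  rw [eq_mul_inv_iff_mul_eq₀ (by positivity)]
  simp only [graphIndicator, sum_boole]
  exact_mod_cast hcard

theorem sum_graphIndicator_mul_graphIndicator {z w : (Fin k → ZMod 2) × (Fin n → ZMod 2)}
    (hz : z.1 ≠ 0) (hw : w.1 ≠ 0) (hzw : z.1 ≠ w.1) :
    ∑ M, graphIndicator M z * graphIndicator M w = 2 ^ (k * n) * ((2 : ℝ) ^ n)⁻¹ ^ 2 := by
  have hcard := card_vecMul_pair_eq_mul_two_pow hz hw hzw z.2 w.2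
  rw [filter_congr fun M _ => and_congr eq_comm eq_comm] at hcard
  rw [inv_pow, ← pow_mul, mul_comm n, eq_mul_inv_iff_mul_eq₀ (by positivity)]
  simp only [graphIndicator, ite_zero_mul_ite_zero, mul_one, sum_boole]
  exact_mod_cast hcard

theorem sum_graphIndicator_sub_mul_le {z w : (Fin k → ZMod 2) × (Fin n → ZMod 2)}
    (hz : z.1 ≠ 0) (hw : w.1 ≠ 0) :
    ∑ M, (graphIndicator M z - ((2 : ℝ) ^ n)⁻¹) * (graphIndicator M w - ((2 : ℝ) ^ n)⁻¹)
      ≤ if z = w then 2 ^ (k * n) * ((2 : ℝ) ^ n)⁻¹ else 0 := by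
  have hsum_z := sum_graphIndicator hz
  have hsum_w := sum_graphIndicator hw
  have hcard := card_matrix_zmod_two (k := k) (n := n)
  have hTq2 : 0 ≤ (2 : ℝ) ^ (k * n) * ((2 : ℝ) ^ n)⁻¹ ^ 2 := by positivity
  set q := ((2 : ℝ) ^ n)⁻¹
  set T := (2 : ℝ) ^ (k * n)
  have hexpand : ∑ M, (graphIndicator M z - q) * (graphIndicator M w - q)
      = ∑ M, graphIndicator M z * graphIndicator M w - T * q ^ 2 := by
    simp only [sub_mul, mul_sub, sum_sub_distrib, ← sum_mul, ← mul_sum, hsum_z, hsum_w,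
      sum_const, card_univ, hcard, nsmul_eq_mul]
    push_cast
    ring
  rw [hexpand]
  split_ifs with hzw
  · subst hzw
    simp only [graphIndicator_mul_self, hsum_z]
    linarith
  by_cases h1 : z.1 = w.1
  · have hdisjoint : ∀ M, graphIndicator M z * graphIndicator M w = 0 := by
      intro M
      simp only [graphIndicator, ite_zero_mul_ite_zero, mul_one, ite_eq_right_iff,
        one_ne_zero, imp_false, not_and]
      intro h2z h2w
      exact hzw (Prod.ext h1 (by rw [h2z, h2w, h1]))
    simpa only [hdisjoint, sum_const_zero, zero_sub, neg_nonpos] using hTq2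
  · rw [sum_graphIndicator_mul_graphIndicator hz hw h1, sub_self]

theorem sum_sum_graphIndicator_sub (S : Finset ((Fin k → ZMod 2) × (Fin n → ZMod 2)))
    (hS : ∀ z ∈ S, z.1 ≠ 0) :
    ∑ M, ∑ z ∈ S, (graphIndicator M z - ((2 : ℝ) ^ n)⁻¹) = 0 := by
  rw [sum_comm]
  refine sum_eq_zero fun z hz => ?_
  rw [sum_sub_distrib, sum_graphIndicator (hS z hz), sum_const, card_univ, card_matrix_zmod_two,
    nsmul_eq_mul]
  push_cast
  ring

theorem sum_sq_sum_graphIndicator_sub_le (S : Finset ((Fin k → ZMod 2) × (Fin n → ZMod 2)))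
    (hS : ∀ z ∈ S, z.1 ≠ 0) :
    ∑ M, (∑ z ∈ S, (graphIndicator M z - ((2 : ℝ) ^ n)⁻¹)) ^ 2
      ≤ #S * (2 ^ (k * n) * ((2 : ℝ) ^ n)⁻¹) :=
  calc ∑ M, (∑ z ∈ S, (graphIndicator M z - ((2 : ℝ) ^ n)⁻¹)) ^ 2
      = ∑ z ∈ S, ∑ w ∈ S, ∑ M,
          (graphIndicator M z - ((2 : ℝ) ^ n)⁻¹) * (graphIndicator M w - ((2 : ℝ) ^ n)⁻¹) := by
        simp only [sq, sum_mul_sum]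
        rw [sum_comm]
        exact sum_congr rfl fun z _ => sum_comm
    _ ≤ ∑ z ∈ S, ∑ w ∈ S, if z = w then 2 ^ (k * n) * ((2 : ℝ) ^ n)⁻¹ else 0 :=
        sum_le_sum fun z hz => sum_le_sum fun w hw =>
          sum_graphIndicator_sub_mul_le (hS z hz) (hS w hw)
    _ = #S * (2 ^ (k * n) * ((2 : ℝ) ^ n)⁻¹) := by
        rw [sum_congr rfl fun z hz => by rw [sum_ite_eq, if_pos hz], sum_const, nsmul_eq_mul]

theorem sq_sum_graphIndicator_zero_sub_le_one (S : Finset ((Fin k → ZMod 2) × (Fin n → ZMod 2)))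
    (hS : ∀ z ∈ S, z.1 = 0) :
    (∑ z ∈ S, (graphIndicator 0 z - ((2 : ℝ) ^ n)⁻¹)) ^ 2 ≤ 1 := by
  have hhit : #{z ∈ S | z.2 = z.1 ᵥ* 0} ≤ 1 := card_le_one.mpr fun a ha b hb => by
    simp only [mem_filter, vecMul_zero] at ha hb
    exact Prod.ext ((hS a ha.1).trans (hS b hb.1).symm) (ha.2.trans hb.2.symm)
  have hcard : #S ≤ 2 ^ n :=
    calc #S ≤ #(univ : Finset (Fin n → ZMod 2)) :=
          card_le_card_of_injOn Prod.snd (fun _ _ => mem_univ _) fun a ha b hb h =>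
            Prod.ext ((hS a ha).trans (hS b hb).symm) h
      _ = 2 ^ n := by simp
  have hhit' : (#{z ∈ S | z.2 = z.1 ᵥ* 0} : ℝ) ≤ 1 := by exact_mod_cast hhit
  have hcard' : (#S : ℝ) * ((2 : ℝ) ^ n)⁻¹ ≤ 1 := by
    rw [mul_inv_le_iff₀ (by positivity), one_mul]
    exact_mod_cast hcard
  have hcard'' : (0 : ℝ) ≤ #S * ((2 : ℝ) ^ n)⁻¹ := by positivity
  rw [sum_sub_distrib, sum_const, nsmul_eq_mul]
  simp only [graphIndicator, sum_boole]
  nlinarith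

theorem sum_sq_card_filter_sub_le (D : Finset ((Fin k → ZMod 2) × (Fin n → ZMod 2))) :
    ∑ M : Matrix (Fin k) (Fin n) (ZMod 2),
        ((#{z ∈ D | z.2 = z.1 ᵥ* M} : ℝ) - ((2 : ℝ) ^ n)⁻¹ * #D) ^ 2
      ≤ 2 ^ (k * n) * (((2 : ℝ) ^ n)⁻¹ * #{z ∈ D | z.1 ≠ 0} + 1) := by
  set q := ((2 : ℝ) ^ n)⁻¹
  set D₁ := {z ∈ D | z.1 ≠ 0}
  -- a point with `z.1 = 0` lies on the graph of `M` iff `z.2 = 0`, independently of `M`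
  set bias := ∑ z ∈ D with ¬z.1 ≠ 0, (graphIndicator 0 z - q)
  have hD₁ : ∀ z ∈ D₁, z.1 ≠ 0 := fun z hz => (mem_filter.mp hz).2
  have hsplit : ∀ M, (#{z ∈ D | z.2 = z.1 ᵥ* M} : ℝ) - q * #D
      = ∑ z ∈ D₁, (graphIndicator M z - q) + bias := by
    intro M
    have hcount : (#{z ∈ D | z.2 = z.1 ᵥ* M} : ℝ) - q * #D
        = ∑ z ∈ D, (graphIndicator M z - q) := by
      simp only [sum_sub_distrib, graphIndicator, sum_boole, sum_const, nsmul_eq_mul, mul_comm]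
    rw [hcount, ← sum_filter_add_sum_filter_not D (·.1 ≠ 0)]
    congr 1
    exact sum_congr rfl fun z hz => by
      rw [graphIndicator_of_fst_eq_zero (not_not.mp (mem_filter.mp hz).2)]
  have hbias : bias ^ 2 ≤ 1 :=
    sq_sum_graphIndicator_zero_sub_le_one _ fun z hz => not_not.mp (mem_filter.mp hz).2
  calc ∑ M, ((#{z ∈ D | z.2 = z.1 ᵥ* M} : ℝ) - q * #D) ^ 2
      = ∑ M, ((∑ z ∈ D₁, (graphIndicator M z - q)) ^ 2
          + 2 * bias * ∑ z ∈ D₁, (graphIndicator M z - q) + bias ^ 2) :=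
        sum_congr rfl fun M _ => by rw [hsplit]; ring
    _ = ∑ M, (∑ z ∈ D₁, (graphIndicator M z - q)) ^ 2
          + 2 * bias * ∑ M, ∑ z ∈ D₁, (graphIndicator M z - q) + 2 ^ (k * n) * bias ^ 2 := by
        rw [sum_add_distrib, sum_add_distrib, ← mul_sum, sum_const, card_univ,
          card_matrix_zmod_two, nsmul_eq_mul]
        push_cast
        rfl
    _ ≤ #D₁ * (2 ^ (k * n) * q) + 2 * bias * 0 + 2 ^ (k * n) * 1 := by
        rw [sum_sum_graphIndicator_sub D₁ hD₁]
        gcongr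
        exact sum_sq_sum_graphIndicator_sub_le D₁ hD₁
    _ = 2 ^ (k * n) * (q * #D₁ + 1) := by ring

-- `N_M / N_D` in the notation of the statement
noncomputable def graphRatio (D : Finset ((Fin k → ZMod 2) × (Fin n → ZMod 2)))
    (M : Matrix (Fin k) (Fin n) (ZMod 2)) : ℝ :=
  #{z ∈ D | z.2 = z.1 ᵥ* M} / #D

theorem graphRatio_of_eq_zero (hn : n = 0) (D : Finset ((Fin k → ZMod 2) × (Fin n → ZMod 2)))
    (hD : D.Nonempty) (M : Matrix (Fin k) (Fin n) (ZMod 2)) : graphRatio D M = 1 := by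
  subst hn
  have hall : {z ∈ D | z.2 = z.1 ᵥ* M} = D :=
    filter_true_of_mem fun z _ => Subsingleton.elim _ _
  rw [graphRatio, hall, div_self (by exact_mod_cast hD.card_pos.ne')]

theorem mean_sq_graphRatio_sub_le (D : Finset ((Fin k → ZMod 2) × (Fin n → ZMod 2)))
    (hD : D.Nonempty) :
    (1 / (2 : ℝ) ^ (k * n)) * ∑ M, (graphRatio D M - ((2 : ℝ) ^ n)⁻¹) ^ 2
      ≤ (((2 : ℝ) ^ n)⁻¹ * #{z ∈ D | z.1 ≠ 0} + 1) / (#D : ℝ) ^ 2 := by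
  have hd : (0 : ℝ) < #D := by exact_mod_cast hD.card_pos
  have hratio : ∀ M, (graphRatio D M - ((2 : ℝ) ^ n)⁻¹) ^ 2
      = ((#{z ∈ D | z.2 = z.1 ᵥ* M} : ℝ) - ((2 : ℝ) ^ n)⁻¹ * #D) ^ 2 / (#D : ℝ) ^ 2 := by
    intro M
    rw [graphRatio, div_sub' hd.ne', div_pow, mul_comm]
  rw [sum_congr rfl fun M _ => hratio M, ← sum_div]
  calc (1 / (2 : ℝ) ^ (k * n)) * ((∑ M : Matrix (Fin k) (Fin n) (ZMod 2),
          ((#{z ∈ D | z.2 = z.1 ᵥ* M} : ℝ) - ((2 : ℝ) ^ n)⁻¹ * #D) ^ 2) / (#D : ℝ) ^ 2)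
      ≤ (1 / (2 : ℝ) ^ (k * n)) * ((2 ^ (k * n) * (((2 : ℝ) ^ n)⁻¹ * #{z ∈ D | z.1 ≠ 0} + 1))
          / (#D : ℝ) ^ 2) := by
        gcongr
        exact sum_sq_card_filter_sub_le D
    _ = _ := by field_simp

theorem mul_card_filter_fst_ne_zero_add_one_le (D : Finset ((Fin k → ZMod 2) × (Fin n → ZMod 2)))
    {q : ℝ} (hq : 0 ≤ q) (hqD : 1 ≤ q * #D) (hk : k = 0 ∨ 10 ≤ k) :
    q * #{z ∈ D | z.1 ≠ 0} + 1 ≤ 2 ^ ((k : ℝ) / 10) * (q * #D) := by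
  rcases hk with rfl | hk
  · have hempty : {z ∈ D | z.1 ≠ 0} = ∅ :=
      filter_false_of_mem fun z _ => not_not.mpr (Subsingleton.elim _ _)
    rw [hempty, card_empty, Nat.cast_zero, mul_zero, zero_add]
    simpa using hqD
  have htwo : (2 : ℝ) ≤ 2 ^ ((k : ℝ) / 10) :=
    calc (2 : ℝ) = 2 ^ (1 : ℝ) := (Real.rpow_one 2).symm
      _ ≤ 2 ^ ((k : ℝ) / 10) := Real.rpow_le_rpow_of_exponent_le one_le_two <| by
          rw [le_div_iff₀ (by norm_num)]
          exact_mod_cast hk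
  have hcard : (#{z ∈ D | z.1 ≠ 0} : ℝ) ≤ #D := by exact_mod_cast card_filter_le D _
  calc q * #{z ∈ D | z.1 ≠ 0} + 1 ≤ 2 * (q * #D) := by nlinarith
    _ ≤ 2 ^ ((k : ℝ) / 10) * (q * #D) := by gcongr

theorem mean_sq_graphRatio_sub_le_of_card_ge (D : Finset ((Fin k → ZMod 2) × (Fin n → ZMod 2)))
    (hD : (2 : ℝ) ^ ((n : ℝ) + k / 2) ≤ #D) (hkn : k = 0 ∨ n = 0 ∨ 10 ≤ k) :
    (1 / (2 : ℝ) ^ (k * n)) * ∑ M, (graphRatio D M - (2 : ℝ) ^ (-(n : ℝ))) ^ 2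
      ≤ (2 : ℝ) ^ (-2 * (n : ℝ) - k / 2) * (2 : ℝ) ^ ((k : ℝ) / 10) := by
  have hDne : D.Nonempty :=
    card_pos.mp (by exact_mod_cast (by positivity : (0 : ℝ) < _).trans_le hD)
  by_cases hn : n = 0
  · subst hn
    simp only [graphRatio_of_eq_zero rfl D hDne, CharP.cast_eq_zero, neg_zero, Real.rpow_zero,
      sub_self, ne_eq, OfNat.ofNat_ne_zero, not_false_eq_true, zero_pow, sum_const_zero, mul_zero]
    positivity
  have hq : (2 : ℝ) ^ (-(n : ℝ)) = ((2 : ℝ) ^ n)⁻¹ := by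
    rw [Real.rpow_neg zero_le_two, Real.rpow_natCast]
  set q := (2 : ℝ) ^ (-(n : ℝ))
  set x := (2 : ℝ) ^ ((n : ℝ) + k / 2)
  set d := (#D : ℝ)
  have hrhs : (2 : ℝ) ^ (-2 * (n : ℝ) - k / 2) = q / x := by
    rw [← Real.rpow_sub two_pos]
    ring_nf
  have hqx : 1 ≤ q * x := by
    rw [← Real.rpow_add two_pos]
    exact Real.one_le_rpow one_le_two (by ring_nf; positivity)
  have hqd : 1 ≤ q * d := hqx.trans (by gcongr)
  calc (1 / (2 : ℝ) ^ (k * n)) * ∑ M, (graphRatio D M - q) ^ 2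
      ≤ (q * #{z ∈ D | z.1 ≠ 0} + 1) / d ^ 2 := by
        rw [hq]
        exact mean_sq_graphRatio_sub_le D hDne
    _ ≤ 2 ^ ((k : ℝ) / 10) * (q * d) / d ^ 2 := by
        gcongr
        exact mul_card_filter_fst_ne_zero_add_one_le D (by positivity) hqd (by omega)
    _ = 2 ^ ((k : ℝ) / 10) * q / d := by field_simp
    _ ≤ 2 ^ ((k : ℝ) / 10) * q / x := by gcongr
    _ = (2 : ℝ) ^ (-2 * (n : ℝ) - k / 2) * (2 : ℝ) ^ ((k : ℝ) / 10) := by rw [hrhs]; ring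

theorem card_graphRatio_close_ge (D : Finset ((Fin k → ZMod 2) × (Fin n → ZMod 2)))
    (hD : (2 : ℝ) ^ ((n : ℝ) + k / 2) ≤ #D) (hkn : k = 0 ∨ n = 0 ∨ 10 ≤ k) :
    (1 - (2 : ℝ) ^ (-(k : ℝ) / 8)) * 2 ^ (k * n)
      ≤ #{M | |graphRatio D M - (2 : ℝ) ^ (-(n : ℝ))|
          ≤ (2 : ℝ) ^ (-(k : ℝ) / 8) * (2 : ℝ) ^ (-(n : ℝ))} := by
  have hexp : (2 : ℝ) ^ (-2 * (n : ℝ) - k / 2) * (2 : ℝ) ^ ((k : ℝ) / 10)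
      ≤ (2 : ℝ) ^ (-(k : ℝ) / 8) * ((2 : ℝ) ^ (-(k : ℝ) / 8) * (2 : ℝ) ^ (-(n : ℝ))) ^ 2 := by
    rw [← Real.rpow_add two_pos, ← Real.rpow_add two_pos, ← Real.rpow_natCast,
      ← Real.rpow_mul zero_le_two, ← Real.rpow_add two_pos]
    exact Real.rpow_le_rpow_of_exponent_le one_le_two <| by
      push_cast
      linarith [k.cast_nonneg (α := ℝ)]
  have hsum := (mean_sq_graphRatio_sub_le_of_card_ge D hD hkn).trans hexp
  rw [one_div_mul_eq_div, div_le_iff₀ (by positivity)] at hsum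
  have hcard : (Fintype.card (Matrix (Fin k) (Fin n) (ZMod 2)) : ℝ) = 2 ^ (k * n) := by
    rw [card_matrix_zmod_two, Nat.cast_pow, Nat.cast_ofNat]
  have hpos : (0 : ℝ) < 2 ^ (-(k : ℝ) / 8) * 2 ^ (-(n : ℝ)) := by positivity
  have hclose := card_filter_abs_le_of_sum_sq_le hpos (by rwa [hcard])
  rwa [hcard] at hclose

end GraphCount

theorem eq_zero_or_sub_eq_zero_or_ten_le {k m : ℕ} (hkm : k ≤ m)
    (hm : (m : ℝ) ≤ 2 ^ ((k : ℝ) / 20)) : k = 0 ∨ m - k = 0 ∨ 10 ≤ k := by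
  by_contra! h
  have hlt : (2 : ℝ) ^ ((k : ℝ) / 20) < 2 ^ (1 : ℝ) :=
    Real.rpow_lt_rpow_of_exponent_lt one_lt_two <| by
      rw [div_lt_one (by norm_num)]
      exact_mod_cast h.2.2.trans (by norm_num)
  have : m < 2 := by exact_mod_cast hm.trans_lt (hlt.trans_eq (Real.rpow_one 2))
  omega

theorem stmt11 (k m : ℕ) (hkm : k ≤ m) (hm : (m:ℝ) ≤ 2 ^ ((k:ℝ)/20))
    (D : Finset ((Fin k → ZMod 2) × (Fin (m - k) → ZMod 2)))
    (hD : (2:ℝ) ^ ((m:ℝ) - (k:ℝ)/2) ≤ D.card) :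
    ((1 / (2:ℝ) ^ (k * (m - k))) * ∑ M : Fin k → Fin (m - k) → ZMod 2,
        (((D.filter (fun z => z.2 = fun j => ∑ i, z.1 i * M i j)).card : ℝ) / D.card
          - (2:ℝ) ^ (-((m:ℝ) - k))) ^ 2
      ≤ (2:ℝ) ^ (-2*((m:ℝ) - k) - (k:ℝ)/2) * (2:ℝ) ^ ((k:ℝ)/10)) ∧
    ((1 - (2:ℝ) ^ (-(k:ℝ)/8)) * 2 ^ (k * (m - k)) ≤
      ((Finset.univ.filter (fun M : Fin k → Fin (m - k) → ZMod 2 =>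
        |((D.filter (fun z => z.2 = fun j => ∑ i, z.1 i * M i j)).card : ℝ) / D.card
          - (2:ℝ) ^ (-((m:ℝ) - k))|
          ≤ (2:ℝ) ^ (-(k:ℝ)/8) * (2:ℝ) ^ (-((m:ℝ) - k)))).card : ℝ)) := by
  have hcast : ((m - k : ℕ) : ℝ) = m - k := Nat.cast_sub hkm
  have hD' : (2 : ℝ) ^ (((m - k : ℕ) : ℝ) + k / 2) ≤ #D := by
    convert hD using 2
    rw [hcast]
    ring
  have hkn := eq_zero_or_sub_eq_zero_or_ten_le hkm hm
  rw [← hcast]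
  exact ⟨mean_sq_graphRatio_sub_le_of_card_ge D hD' hkn, card_graphRatio_close_ge D hD' hkn⟩
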